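/- Let n, r, s be integers with n ≥ 2r+1, r ≥ 0, s ≥ 1, and let g ≥ 1 be a real number such that Λ_{n,r,s}(τ) > 0 for every real τ > g. Then e_{n,r,s} ≤ g; that is, inf{ t/m : t, m integers with t ≥ m ≥ 1 and P_{n,r,s,m}(t) > 0 } ≤ g. -/

import Mathlib

/-!
Splitting `t − i = (t − m) + (m − i)` in `C(t−i+r, r)` by Vandermonde and summing over `i` with
`Σ_{i+j=N} C(a+i, a)·C(b+j, b) = C(a+b+1+N, a+b+1)` (a product of power series `(1 − X)^{-a-1}`)
gives `n!·P_{n,r,s,m}(t) ≥ tⁿ − s·Σ_{j≤r} C(n,j)·(t−m)ʲ·(m+n)ⁿ⁻ʲ`.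
For `τ > g` take `m = k`, `t = ⌊τk⌋`: divided by `kⁿ` the right side tends to `n!·Λ_{n,r,s}(τ) > 0`,
so `P_{n,r,s,k}(⌊τk⌋) > 0` for large `k`, while `⌊τk⌋/k → τ`. Hence `e_{n,r,s} ≤ τ` for all `τ > g`.
-/

/-- `Λ_{n,r,s}(τ) = (1/n!)·(τ^n − s·Σ_{j=0}^r C(n,j)·(τ−1)^j)`. -/
noncomputable def Lam (n r s : ℕ) (τ : ℝ) : ℝ :=
  (1 / (Nat.factorial n : ℝ)) *
    (τ ^ n - (s : ℝ) * ∑ j ∈ Finset.range (r + 1), (Nat.choose n j : ℝ) * (τ - 1) ^ j)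

/-- `P_{n,r,s,m}(t) = C(t+n, n) − s·Σ_{i=0}^{m−1} C(t−i+r, r)·C(i+n−r−1, n−r−1)`. -/
def Ppoly (n r s m t : ℕ) : ℤ :=
  (Nat.choose (t + n) n : ℤ) -
    (s : ℤ) * ∑ i ∈ Finset.range m,
      (Nat.choose (t - i + r) r : ℤ) * (Nat.choose (i + n - r - 1) (n - r - 1) : ℤ)

open Finset Filter Topology
open scoped Nat

theorem sum_antidiagonal_add_choose_mul_add_choose (a b N : ℕ) :
    ∑ ij ∈ antidiagonal N, (a + ij.1).choose a * (b + ij.2).choose b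
      = (a + b + 1 + N).choose (a + b + 1) := by
  have h := congrArg (PowerSeries.coeff N)
    (pow_add (PowerSeries.mk 1 : PowerSeries ℤ) (a + 1) (b + 1))
  rw [show a + 1 + (b + 1) = (a + b + 1) + 1 by ring, PowerSeries.mk_one_pow_eq_mk_choose_add,
    PowerSeries.mk_one_pow_eq_mk_choose_add, PowerSeries.mk_one_pow_eq_mk_choose_add,
    PowerSeries.coeff_mul] at h
  simp only [PowerSeries.coeff_mk] at h
  exact_mod_cast h.symm

theorem sum_range_add_choose_mul_add_choose_le (a b m j : ℕ) :
    ∑ i ∈ range m, (a + i).choose a * (b + (m + j - i)).choose b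
      ≤ (a + b + 1 + (m + j)).choose (a + b + 1) := by
  rw [← sum_antidiagonal_add_choose_mul_add_choose, Nat.sum_antidiagonal_eq_sum_range_succ_mk]
  exact sum_le_sum_of_subset (range_subset_range.2 (by omega))

theorem factorial_mul_choose_mul_choose_le {n j : ℕ} (hj : j ≤ n) (A B : ℕ) :
    n ! * (A.choose j * B.choose (n - j)) ≤ n.choose j * (A ^ j * B ^ (n - j)) := by
  rw [← Nat.choose_mul_factorial_mul_factorial hj, mul_assoc, mul_assoc]
  gcongr n.choose j * ?_
  rw [← mul_assoc, mul_mul_mul_comm, ← Nat.descFactorial_eq_factorial_mul_choose,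
    ← Nat.descFactorial_eq_factorial_mul_choose]
  exact Nat.mul_le_mul (Nat.descFactorial_le_pow _ _) (Nat.descFactorial_le_pow _ _)

theorem factorial_mul_sum_choose_mul_choose_le {n r m t : ℕ} (hr : r < n) (hmt : m ≤ t) :
    n ! * ∑ i ∈ range m, (t - i + r).choose r * (i + n - r - 1).choose (n - r - 1)
      ≤ ∑ j ∈ range (r + 1), n.choose j * ((t - m) ^ j * (m + n) ^ (n - j)) := by
  have vandermonde : ∀ i ∈ range m, (t - i + r).choose r * (i + n - r - 1).choose (n - r - 1)
      = ∑ j ∈ range (r + 1), (t - m).choose j *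
          ((n - r - 1 + i).choose (n - r - 1) * (r - j + (m + j - i)).choose (r - j)) := by
    intro i hi
    rw [show t - i + r = (t - m) + (m - i + r) by grind, Nat.add_choose_eq,
      Nat.sum_antidiagonal_eq_sum_range_succ_mk, sum_mul]
    refine sum_congr rfl fun j hj => ?_
    rw [show r - j + (m + j - i) = m - i + r by grind, show i + n - r - 1 = n - r - 1 + i by omega]
    ring
  have partial_sum : ∀ j ∈ range (r + 1), ∑ i ∈ range m,
      (n - r - 1 + i).choose (n - r - 1) * (r - j + (m + j - i)).choose (r - j)
        ≤ (m + n).choose (n - j) := by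
    intro j hj
    have := sum_range_add_choose_mul_add_choose_le (n - r - 1) (r - j) m j
    rwa [show n - r - 1 + (r - j) + 1 = n - j by grind,
      show n - j + (m + j) = m + n by grind] at this
  calc n ! * ∑ i ∈ range m, (t - i + r).choose r * (i + n - r - 1).choose (n - r - 1)
      = ∑ j ∈ range (r + 1), n ! * ((t - m).choose j * ∑ i ∈ range m,
          (n - r - 1 + i).choose (n - r - 1) * (r - j + (m + j - i)).choose (r - j)) := by
        rw [sum_congr rfl vandermonde, sum_comm, mul_sum]
        simp only [mul_sum]
    _ ≤ ∑ j ∈ range (r + 1), n ! * ((t - m).choose j * (m + n).choose (n - j)) := by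
        gcongr with j hj
        exact partial_sum j hj
    _ ≤ ∑ j ∈ range (r + 1), n.choose j * ((t - m) ^ j * (m + n) ^ (n - j)) := by
        refine sum_le_sum fun j hj => factorial_mul_choose_mul_choose_le ?_ _ _
        grind

theorem pow_le_factorial_mul_add_choose (t n : ℕ) : t ^ n ≤ n ! * (t + n).choose n := by
  rw [← Nat.ascFactorial_eq_factorial_mul_choose]
  exact (Nat.pow_le_pow_left t.le_succ n).trans (Nat.pow_succ_le_ascFactorial (t + 1) n)

theorem pow_sub_mul_sum_le_factorial_mul_Ppoly {n r m t : ℕ} (s : ℕ) (hr : r < n)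
    (hmt : m ≤ t) :
    (t : ℝ) ^ n - s * ∑ j ∈ range (r + 1),
        (n.choose j : ℝ) * (((t : ℝ) - m) ^ j * ((m : ℝ) + n) ^ (n - j))
      ≤ n ! * Ppoly n r s m t := by
  have hC : ((t ^ n : ℕ) : ℝ) ≤ ((n ! * (t + n).choose n : ℕ) : ℝ) := by
    exact_mod_cast pow_le_factorial_mul_add_choose t n
  have hS := factorial_mul_sum_choose_mul_choose_le hr hmt
  replace hS : ((_ : ℕ) : ℝ) ≤ ((_ : ℕ) : ℝ) := Nat.cast_le.2 hS
  push_cast [Nat.cast_sub hmt] at hC hS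
  unfold Ppoly
  push_cast
  nlinarith [mul_le_mul_of_nonneg_left hS (Nat.cast_nonneg (α := ℝ) s)]

/-- `k⁻ⁿ` times the lower bound for `n!·P_{n,r,s,k}(t)`, written in `(t/k, 1/k)`. -/
noncomputable def ppolyMinorant (n r s : ℕ) (p : ℝ × ℝ) : ℝ :=
  p.1 ^ n - s * ∑ j ∈ range (r + 1), (n.choose j : ℝ) * ((p.1 - 1) ^ j * (1 + n * p.2) ^ (n - j))

theorem continuous_ppolyMinorant (n r s : ℕ) : Continuous (ppolyMinorant n r s) := by
  unfold ppolyMinorant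
  fun_prop

theorem ppolyMinorant_zero (n r s : ℕ) (τ : ℝ) :
    ppolyMinorant n r s (τ, 0) = n ! * Lam n r s τ := by
  simp [ppolyMinorant, Lam, Nat.factorial_ne_zero]

theorem pow_mul_ppolyMinorant_le {n r k t : ℕ} (s : ℕ) (hr : r < n) (hk : 0 < k)
    (hkt : k ≤ t) :
    (k : ℝ) ^ n * ppolyMinorant n r s (t / k, 1 / k) ≤ n ! * Ppoly n r s k t := by
  refine le_of_eq_of_le ?_ (pow_sub_mul_sum_le_factorial_mul_Ppoly s hr hkt)
  have hk' : (k : ℝ) ≠ 0 := by positivity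
  have hpow : (k : ℝ) ^ n * (t / k) ^ n = t ^ n := by rw [← mul_pow, mul_div_cancel₀ _ hk']
  have hterm : ∀ j ∈ range (r + 1),
      (k : ℝ) ^ n * ((n.choose j : ℝ) * ((t / k - 1) ^ j * (1 + n * (1 / k)) ^ (n - j)))
        = (n.choose j : ℝ) * (((t : ℝ) - k) ^ j * ((k : ℝ) + n) ^ (n - j)) := by
    intro j hj
    rw [← pow_mul_pow_sub (k : ℝ) (show j ≤ n by grind),
      show (t : ℝ) - k = k * (t / k - 1) by field_simp,
      show (k : ℝ) + n = k * (1 + n * (1 / k)) by field_simp, mul_pow, mul_pow]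
    ring
  rw [ppolyMinorant, mul_sub, mul_left_comm, mul_sum, sum_congr rfl hterm, hpow]

theorem tendsto_natFloor_mul_div_natCast {τ : ℝ} (hτ : 0 ≤ τ) :
    Tendsto (fun k : ℕ => (⌊τ * k⌋₊ : ℝ) / k) atTop (𝓝 τ) :=
  (tendsto_nat_floor_mul_div_atTop hτ).comp tendsto_natCast_atTop_atTop

theorem le_natFloor_mul_natCast {τ : ℝ} (hτ : 1 ≤ τ) (k : ℕ) : k ≤ ⌊τ * k⌋₊ :=
  Nat.le_floor (le_mul_of_one_le_left k.cast_nonneg hτ)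

theorem eventually_Ppoly_natFloor_pos {n r s : ℕ} {τ : ℝ} (hr : r < n) (hτ : 1 ≤ τ)
    (hΛ : 0 < Lam n r s τ) :
    ∀ᶠ k : ℕ in atTop, 0 < Ppoly n r s k ⌊τ * k⌋₊ := by
  have hlim : Tendsto (fun k : ℕ => ppolyMinorant n r s ((⌊τ * k⌋₊ : ℝ) / k, 1 / k)) atTop
      (𝓝 (n ! * Lam n r s τ)) := by
    rw [← ppolyMinorant_zero]
    exact (continuous_ppolyMinorant n r s).continuousAt.tendsto.comp
      ((tendsto_natFloor_mul_div_natCast (by linarith)).prodMk_nhds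
        tendsto_one_div_atTop_nhds_zero_nat)
  filter_upwards [hlim.eventually (lt_mem_nhds (by positivity)), eventually_gt_atTop 0]
    with k hminorant hk
  have := (pow_mul_ppolyMinorant_le s hr hk (le_natFloor_mul_natCast hτ k)).trans_lt'
    (mul_pos (by positivity) hminorant)
  exact_mod_cast pos_of_mul_pos_right this (by positivity)

theorem stmt_8_general (n r s : ℕ) (hn : 2 * r + 1 ≤ n)
    (g : ℝ) (hg1 : 1 ≤ g) (hg : ∀ τ : ℝ, g < τ → 0 < Lam n r s τ) :
    sInf {x : ℝ | ∃ t m : ℕ, 1 ≤ m ∧ m ≤ t ∧ 0 < Ppoly n r s m t ∧ x = (t : ℝ) / (m : ℝ)}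
      ≤ g := by
  refine le_of_forall_gt_imp_ge_of_dense fun τ hτ => ?_
  have hτ1 : 1 ≤ τ := hg1.trans hτ.le
  refine ge_of_tendsto (tendsto_natFloor_mul_div_natCast (by linarith)) ?_
  filter_upwards [eventually_Ppoly_natFloor_pos (by omega) hτ1 (hg τ hτ), eventually_ge_atTop 1]
    with k hP hk
  refine csInf_le ⟨0, ?_⟩ ⟨_, k, hk, le_natFloor_mul_natCast hτ1 k, hP, rfl⟩
  rintro _ ⟨t, m, -, -, -, rfl⟩
  positivity

/-- If `g ≥ 1` is real with `Λ_{n,r,s}(τ) > 0` for every real `τ > g`, then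
`e_{n,r,s} = inf{ t/m : t ≥ m ≥ 1, P_{n,r,s,m}(t) > 0 } ≤ g`. -/
theorem stmt_8 (n r s : ℕ) (hn : 2 * r + 1 ≤ n) (hs : 1 ≤ s)
    (g : ℝ) (hg1 : 1 ≤ g) (hg : ∀ τ : ℝ, g < τ → 0 < Lam n r s τ) :
    sInf {x : ℝ | ∃ t m : ℕ, 1 ≤ m ∧ m ≤ t ∧ 0 < Ppoly n r s m t ∧ x = (t : ℝ) / (m : ℝ)}
      ≤ g :=
  stmt_8_general n r s hn g hg1 hg
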